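/- Suppose K is closed at infinity and there exists some polynomial in ℝ[x]_A lying in the interior of P_d(K), where d = deg(A). Then p ∈ int(P_A(K)) if and only if the degree-d homogenization p̂ of p is strictly positive on the compact set K̃. -/

import Mathlib

open MvPolynomial

/-- Evaluation at `(x₀, x)` of the homogenization `p̃(x₀,x) = x₀^{deg p} p(x/x₀)` of `p`,
given by `∑_α p_α x₀^{deg p − |α|} x^α`. -/
noncomputable def homEval {n : ℕ} (p : MvPolynomial (Fin n) ℝ) (x₀ : ℝ) (x : Fin n → ℝ) : ℝ :=
  ∑ α ∈ p.support, p.coeff α * x₀ ^ (p.totalDegree - α.sum fun _ e => e) * ∏ i, x i ^ α i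

/-- The semialgebraic set `K = {x : c_i(x) = 0 (i ∈ E), c_j(x) ≥ 0 (j ∈ I)}`. -/
def semiSet {n : ℕ} {ι : Type*} (E I : Set ι) (g : ι → MvPolynomial (Fin n) ℝ) :
    Set (Fin n → ℝ) :=
  {x | (∀ i ∈ E, eval x (g i) = 0) ∧ (∀ j ∈ I, 0 ≤ eval x (g j))}

/-- The homogenized cone `K̃^c` with strictly positive `x₀`-coordinate. -/
def tildeC {n : ℕ} {ι : Type*} (E I : Set ι) (g : ι → MvPolynomial (Fin n) ℝ) :
    Set (ℝ × (Fin n → ℝ)) :=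
  {z | 0 < z.1 ∧ (∀ i ∈ E, homEval (g i) z.1 z.2 = 0) ∧ (∀ j ∈ I, 0 ≤ homEval (g j) z.1 z.2)}

/-- The homogenized cone `K̃^h` with nonnegative `x₀`-coordinate. -/
def tildeH {n : ℕ} {ι : Type*} (E I : Set ι) (g : ι → MvPolynomial (Fin n) ℝ) :
    Set (ℝ × (Fin n → ℝ)) :=
  {z | 0 ≤ z.1 ∧ (∀ i ∈ E, homEval (g i) z.1 z.2 = 0) ∧ (∀ j ∈ I, 0 ≤ homEval (g j) z.1 z.2)}

/-- `K` is closed at infinity: `cl(K̃^c) = K̃^h`. -/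
def closedAtInfty {n : ℕ} {ι : Type*} (E I : Set ι) (g : ι → MvPolynomial (Fin n) ℝ) : Prop :=
  closure (tildeC E I g) = tildeH E I g

/-- The compact homogenized set `K̃ = K̃^h ∩ {x₀² + ‖x‖² = 1}`. -/
def tildeK {n : ℕ} {ι : Type*} (E I : Set ι) (g : ι → MvPolynomial (Fin n) ℝ) :
    Set (ℝ × (Fin n → ℝ)) :=
  tildeH E I g ∩ {z | z.1 ^ 2 + ∑ i, z.2 i ^ 2 = 1}

/-- The monomial `x^α`. -/
noncomputable def mono {n : ℕ} (α : Fin n → ℕ) (x : Fin n → ℝ) : ℝ := ∏ i, x i ^ α i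

/-- The exponents of the monomials of total degree at most `d` in `n` variables. -/
def expSet (n d : ℕ) : Finset (Fin n → ℕ) :=
  (Fintype.piFinset fun _ : Fin n => Finset.range (d + 1)).filter fun α => ∑ i, α i ≤ d

/-- The polynomial in `ℝ[x]_d` with coefficient vector `c`. -/
noncomputable def polyD {n d : ℕ} (c : expSet n d → ℝ) (x : Fin n → ℝ) : ℝ :=
  ∑ α : expSet n d, c α * mono (α : Fin n → ℕ) x

/-- The degree-`d` homogeneous part `p^{(d)}` of the polynomial with coefficients `c`. -/
noncomputable def topPartD {n d : ℕ} (c : expSet n d → ℝ) (x : Fin n → ℝ) : ℝ :=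
  ∑ α : expSet n d,
    if (∑ i, (α : Fin n → ℕ) i) = d then c α * mono (α : Fin n → ℕ) x else 0

/-- The set `K^e` of directions at infinity: common zeros/nonnegativity of the top-degree
homogeneous parts of the constraints, on the unit sphere. -/
def dirSet {n : ℕ} {ι : Type*} (E I : Set ι) (g : ι → MvPolynomial (Fin n) ℝ) :
    Set (Fin n → ℝ) :=
  {x | (∀ i ∈ E, eval x (homogeneousComponent (g i).totalDegree (g i)) = 0) ∧
       (∀ j ∈ I, 0 ≤ eval x (homogeneousComponent (g j).totalDegree (g j))) ∧
       ∑ i, x i ^ 2 = 1}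


/-- The polynomial with coefficient vector `c` supported on the finite power set `A`. -/
noncomputable def polyA {n : ℕ} (A : Finset (Fin n → ℕ)) (c : A → ℝ) (x : Fin n → ℝ) : ℝ :=
  ∑ α : A, c α * mono (α : Fin n → ℕ) x

/-- Evaluation at `(x₀,x)` of the degree-`d` homogenization `p̂(x₀,x) = x₀^d p(x/x₀)`
of the polynomial with coefficients `c` supported on `A`. -/
noncomputable def hatEval {n : ℕ} (A : Finset (Fin n → ℕ)) (d : ℕ) (c : A → ℝ)
    (x₀ : ℝ) (x : Fin n → ℝ) : ℝ :=
  ∑ α : A, c α * x₀ ^ (d - ∑ i, (α : Fin n → ℕ) i) * mono (α : Fin n → ℕ) x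

/-!
Scaling `x ↦ (t, t • x)` with `t > 0` identifies `K` with the slice `K̃^c` of the homogenized
cone, and `p̂ (t, t • x) = t ^ d * p x`. Closedness at infinity makes `K̃` compact and, by
continuity, gives `p̂ ≥ 0` on `K̃` whenever `p ≥ 0` on `K`.

If `p̂ > 0` on the compact set `K̃`, this persists under small perturbations of the coefficients,
so `p` is interior. Conversely, if `p` is interior then `p̂ ± ε q̂ ≥ 0` at each `z ∈ K̃`, so
`p̂ z > 0` as soon as some `q` has `q̂ z ≠ 0`. The same argument in `ℝ[x]_d`, where a suitable
monomial does not vanish at `z`, shows that the given interior point `c₀` of `P_d(K)` has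
`ĉ₀ z > 0`; since `c₀` is supported on `A`, it is such a `q`.
-/

open Filter Topology

theorem LinearMap.pos_of_mem_interior_of_nonneg {V : Type*} [AddCommGroup V] [Module ℝ V]
    [TopologicalSpace V] [IsTopologicalAddGroup V] [ContinuousSMul ℝ V] (L : V →ₗ[ℝ] ℝ)
    (hL : L ≠ 0) {S : Set V} (hS : ∀ v ∈ S, 0 ≤ L v) {c : V} (hc : c ∈ interior S) :
    0 < L c := by
  obtain ⟨w, hw⟩ := DFunLike.ne_iff.1 hL
  set u := (L w)⁻¹ • w
  have hu : L u = 1 := by simpa [u] using inv_mul_cancel₀ hw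
  have hnear : ∀ᶠ t in 𝓝 (0 : ℝ), c - t • u ∈ S := by
    have hcont : Continuous fun t : ℝ => c - t • u := by fun_prop
    exact hcont.continuousAt.preimage_mem_nhds (by simpa using mem_interior_iff_mem_nhds.1 hc)
  obtain ⟨t, ht, htS⟩ := hnear.exists_gt
  have := hS _ htS
  rw [map_sub, map_smul, hu, smul_eq_mul, mul_one] at this
  linarith

theorem IsCompact.isOpen_setOf_forall_pos {X Y : Type*} [TopologicalSpace X] [TopologicalSpace Y]
    {K : Set Y} (hK : IsCompact K) {f : X × Y → ℝ} (hf : Continuous f) :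
    IsOpen {x | ∀ y ∈ K, 0 < f (x, y)} :=
  isOpen_iff_eventually.2 fun _ hx => hK.eventually_forall_of_forall_eventually fun y hy =>
    continuousAt_const.eventually_lt hf.continuousAt (hx y hy)

section Homogenization

variable {n d : ℕ}

lemma mono_smul (α : Fin n → ℕ) (t : ℝ) (x : Fin n → ℝ) :
    mono α (t • x) = t ^ (∑ i, α i) * mono α x := by
  simp only [mono, Pi.smul_apply, smul_eq_mul, mul_pow, Finset.prod_mul_distrib,
    Finset.prod_pow_eq_pow_sum]

lemma mono_single (i : Fin n) (k : ℕ) (x : Fin n → ℝ) : mono (Pi.single i k) x = x i ^ k := by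
  rw [mono, Fintype.prod_eq_single i fun j hj => by simp [hj]]
  simp

lemma mem_expSet_iff {α : Fin n → ℕ} : α ∈ expSet n d ↔ ∑ i, α i ≤ d := by
  simp only [expSet, Finset.mem_filter, Fintype.mem_piFinset, Finset.mem_range]
  exact and_iff_right_of_imp fun h i =>
    Nat.lt_succ_of_le ((Finset.single_le_sum (by simp) (Finset.mem_univ i)).trans h)

lemma homEval_smul (p : MvPolynomial (Fin n) ℝ) (t : ℝ) (x : Fin n → ℝ) :
    homEval p t (t • x) = t ^ p.totalDegree * MvPolynomial.eval x p := by
  rw [homEval, MvPolynomial.eval_eq', Finset.mul_sum]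
  refine Finset.sum_congr rfl fun α hα => ?_
  have hdeg : (α.sum fun _ e => e) = ∑ i, α i := Finsupp.sum_fintype _ _ fun _ => rfl
  have hmono := mono_smul (⇑α) t x
  simp only [mono] at hmono
  rw [hmono, ← hdeg, ← pow_sub_mul_pow t (MvPolynomial.le_totalDegree hα)]
  ring

lemma homEval_eq_of_pos (p : MvPolynomial (Fin n) ℝ) {t : ℝ} (ht : 0 < t) (x : Fin n → ℝ) :
    homEval p t x = t ^ p.totalDegree * MvPolynomial.eval (t⁻¹ • x) p := by
  rw [← homEval_smul, smul_inv_smul₀ ht.ne']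

variable {A : Finset (Fin n → ℕ)}

lemma hatEval_smul (hdeg : ∀ α ∈ A, ∑ i, α i ≤ d) (c : A → ℝ) (t : ℝ) (x : Fin n → ℝ) :
    hatEval A d c t (t • x) = t ^ d * polyA A c x := by
  rw [hatEval, polyA, Finset.mul_sum]
  refine Finset.sum_congr rfl fun α _ => ?_
  rw [mono_smul, ← pow_sub_mul_pow t (hdeg α α.2)]
  ring

lemma hatEval_single (α : A) (x₀ : ℝ) (x : Fin n → ℝ) :
    hatEval A d (Pi.single α 1) x₀ x = x₀ ^ (d - ∑ i, (α : Fin n → ℕ) i) * mono α x := by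
  rw [hatEval, Fintype.sum_eq_single α fun β hβ => by simp [hβ]]
  simp

lemma hatEval_comp_inclusion {B : Finset (Fin n → ℕ)} (hAB : A ⊆ B) (c : B → ℝ)
    (hc : ∀ β : B, (β : Fin n → ℕ) ∉ A → c β = 0) (x₀ : ℝ) (x : Fin n → ℝ) :
    hatEval A d (fun α => c ⟨α, hAB α.2⟩) x₀ x = hatEval B d c x₀ x :=
  Fintype.sum_of_injective (fun α => ⟨α, hAB α.2⟩)
    (fun _ _ h => Subtype.ext (Subtype.mk.inj h)) _ _
    (fun β hβ => by rw [hc β fun h => hβ ⟨⟨β, h⟩, rfl⟩, zero_mul, zero_mul]) fun _ => rfl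

lemma continuous_hatEval :
    Continuous fun p : (A → ℝ) × (ℝ × (Fin n → ℝ)) => hatEval A d p.1 p.2.1 p.2.2 := by
  unfold hatEval mono
  fun_prop

noncomputable def hatEvalₗ (A : Finset (Fin n → ℕ)) (d : ℕ) (x₀ : ℝ) (x : Fin n → ℝ) :
    (A → ℝ) →ₗ[ℝ] ℝ where
  toFun c := hatEval A d c x₀ x
  map_add' c v := by simp only [hatEval, Pi.add_apply, add_mul, Finset.sum_add_distrib]
  map_smul' t c := by
    simp only [hatEval, Pi.smul_apply, smul_eq_mul, Finset.mul_sum, mul_assoc, RingHom.id_apply]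

lemma hatEvalₗ_apply (x₀ : ℝ) (x : Fin n → ℝ) (c : A → ℝ) :
    hatEvalₗ A d x₀ x c = hatEval A d c x₀ x := rfl

lemma hatEvalₗ_expSet_ne_zero {z : ℝ × (Fin n → ℝ)} (hz : z ≠ 0) :
    hatEvalₗ (expSet n d) d z.1 z.2 ≠ 0 := by
  obtain ⟨α, hα, hne⟩ : ∃ α ∈ expSet n d, z.1 ^ (d - ∑ i, α i) * mono α z.2 ≠ 0 := by
    by_cases hz₁ : z.1 = 0
    · obtain ⟨i, hi⟩ : ∃ i, z.2 i ≠ 0 := Function.ne_iff.1 fun h => hz (Prod.ext hz₁ h)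
      refine ⟨Pi.single i d, mem_expSet_iff.2 (by simp), ?_⟩
      simpa [mono_single] using pow_ne_zero d hi
    · exact ⟨0, mem_expSet_iff.2 (by simp), by simpa [mono] using pow_ne_zero d hz₁⟩
  intro h
  apply hne
  simpa [hatEvalₗ_apply, hatEval_single] using LinearMap.congr_fun h (Pi.single ⟨α, hα⟩ 1)

end Homogenization

section HomogenizedSet

variable {n d : ℕ} {ι : Type*} {E I : Set ι} {g : ι → MvPolynomial (Fin n) ℝ}

lemma mem_tildeC_iff {z : ℝ × (Fin n → ℝ)} :
    z ∈ tildeC E I g ↔ 0 < z.1 ∧ z.1⁻¹ • z.2 ∈ semiSet E I g := by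
  refine and_congr_right fun ht => ?_
  simp only [semiSet, Set.mem_ofPred_eq, homEval_eq_of_pos _ ht, mul_eq_zero,
    pow_ne_zero _ ht.ne', false_or, mul_nonneg_iff_of_pos_left (pow_pos ht _)]

lemma smul_mem_tildeC {x : Fin n → ℝ} (hx : x ∈ semiSet E I g) {t : ℝ} (ht : 0 < t) :
    (t, t • x) ∈ tildeC E I g :=
  mem_tildeC_iff.2 ⟨ht, by rwa [inv_smul_smul₀ ht.ne']⟩

lemma exists_pos_smul_mem_tildeK (hinf : closedAtInfty E I g) {x : Fin n → ℝ}
    (hx : x ∈ semiSet E I g) : ∃ t : ℝ, 0 < t ∧ (t, t • x) ∈ tildeK E I g := by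
  have hs : 0 < 1 + ∑ i, x i ^ 2 := by positivity
  refine ⟨(√(1 + ∑ i, x i ^ 2))⁻¹, by positivity,
    hinf ▸ subset_closure (smul_mem_tildeC hx (by positivity)), ?_⟩
  show _ + ∑ i, ((√(1 + ∑ i, x i ^ 2))⁻¹ * x i) ^ 2 = 1
  simp only [mul_pow, ← Finset.mul_sum, inv_pow, Real.sq_sqrt hs.le]
  field_simp

lemma norm_le_one_of_mem_tildeK {z : ℝ × (Fin n → ℝ)} (hz : z ∈ tildeK E I g) : ‖z‖ ≤ 1 := by
  have hsum : z.1 ^ 2 + ∑ i, z.2 i ^ 2 = 1 := hz.2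
  have hsq : ∀ i, z.2 i ^ 2 ≤ ∑ j, z.2 j ^ 2 := fun i =>
    Finset.single_le_sum (fun j _ => sq_nonneg (z.2 j)) (Finset.mem_univ i)
  refine max_le ?_ ((pi_norm_le_iff_of_nonneg zero_le_one).2 fun i => ?_)
  · rw [Real.norm_eq_abs, ← sq_le_one_iff_abs_le_one]
    nlinarith [Finset.sum_nonneg fun j (_ : j ∈ Finset.univ) => sq_nonneg (z.2 j)]
  · rw [Real.norm_eq_abs, ← sq_le_one_iff_abs_le_one]
    nlinarith [hsq i, sq_nonneg z.1]

lemma isCompact_tildeK (hinf : closedAtInfty E I g) : IsCompact (tildeK E I g) :=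
  Metric.isCompact_of_isClosed_isBounded
    ((hinf ▸ isClosed_closure).inter (isClosed_eq (by fun_prop) continuous_const))
    ((Metric.isBounded_closedBall (x := 0) (r := 1)).subset fun _ hz =>
      mem_closedBall_zero_iff.2 (norm_le_one_of_mem_tildeK hz))

variable {A : Finset (Fin n → ℕ)}

lemma hatEval_nonneg_of_mem_tildeH (hdeg : ∀ α ∈ A, ∑ i, α i ≤ d) (hinf : closedAtInfty E I g)
    {c : A → ℝ} (hc : ∀ x ∈ semiSet E I g, 0 ≤ polyA A c x) {z : ℝ × (Fin n → ℝ)}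
    (hz : z ∈ tildeH E I g) : 0 ≤ hatEval A d c z.1 z.2 := by
  rw [← hinf] at hz
  refine closure_minimal (fun w hw => ?_)
    (isClosed_le continuous_const (continuous_hatEval.comp (Continuous.prodMk_right c))) hz
  obtain ⟨ht, hx⟩ := mem_tildeC_iff.1 hw
  have hscale := hatEval_smul hdeg c w.1 (w.1⁻¹ • w.2)
  rw [smul_inv_smul₀ ht.ne'] at hscale
  change 0 ≤ hatEval A d c w.1 w.2
  rw [hscale]
  exact mul_nonneg (pow_nonneg ht.le _) (hc _ hx)

lemma hatEval_pos_of_mem_interior (hdeg : ∀ α ∈ A, ∑ i, α i ≤ d) (hinf : closedAtInfty E I g)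
    {c : A → ℝ} (hc : c ∈ interior {c' : A → ℝ | ∀ x ∈ semiSet E I g, 0 ≤ polyA A c' x})
    {z : ℝ × (Fin n → ℝ)} (hz : z ∈ tildeH E I g) (hne : hatEvalₗ A d z.1 z.2 ≠ 0) :
    0 < hatEval A d c z.1 z.2 :=
  (hatEvalₗ A d z.1 z.2).pos_of_mem_interior_of_nonneg hne
    (fun _ hc' => hatEval_nonneg_of_mem_tildeH hdeg hinf hc' hz) hc

lemma setOf_forall_hatEval_pos_subset (hdeg : ∀ α ∈ A, ∑ i, α i ≤ d)
    (hinf : closedAtInfty E I g) :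
    {c : A → ℝ | ∀ z ∈ tildeK E I g, 0 < hatEval A d c z.1 z.2} ⊆
      {c | ∀ x ∈ semiSet E I g, 0 ≤ polyA A c x} := by
  intro c hc x hx
  obtain ⟨t, ht, htx⟩ := exists_pos_smul_mem_tildeK hinf hx
  have hpos := hc _ htx
  rw [hatEval_smul hdeg] at hpos
  exact (pos_of_mul_pos_right hpos (pow_nonneg ht.le d)).le

end HomogenizedSet

theorem stmt11_general {n d : ℕ} {ι : Type*} (E I : Set ι) (g : ι → MvPolynomial (Fin n) ℝ)
    (A : Finset (Fin n → ℕ)) (hdeg : ∀ α ∈ A, ∑ i, α i ≤ d)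
    (hinf : closedAtInfty E I g)
    (hint : ∃ c₀ : expSet n d → ℝ,
      c₀ ∈ interior {c : expSet n d → ℝ | ∀ x ∈ semiSet E I g, 0 ≤ polyD c x} ∧
      ∀ α : expSet n d, (α : Fin n → ℕ) ∉ A → c₀ α = 0)
    (c : A → ℝ) :
    c ∈ interior {c' : A → ℝ | ∀ x ∈ semiSet E I g, 0 ≤ polyA A c' x} ↔
      ∀ z ∈ tildeK E I g, 0 < hatEval A d c z.1 z.2 := by
  obtain ⟨c₀, hc₀, hc₀A⟩ := hint
  constructor
  · intro hc z hz
    have hz₀ : z ≠ 0 := by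
      rintro rfl
      simpa using hz.2
    have hc₀pos : 0 < hatEval (expSet n d) d c₀ z.1 z.2 :=
      hatEval_pos_of_mem_interior (fun _ => mem_expSet_iff.1) hinf hc₀ hz.1
        (hatEvalₗ_expSet_ne_zero hz₀)
    refine hatEval_pos_of_mem_interior hdeg hinf hc hz.1 fun h => hc₀pos.ne' ?_
    rw [← hatEval_comp_inclusion (fun α hα => mem_expSet_iff.2 (hdeg α hα)) c₀ hc₀A]
    exact LinearMap.congr_fun h _
  · exact fun hc => interior_maximal (setOf_forall_hatEval_pos_subset hdeg hinf)
      ((isCompact_tildeK hinf).isOpen_setOf_forall_pos continuous_hatEval) hc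

/-- suppose `K` is closed at infinity, `d = deg(A)`, and some polynomial
supported on `A` lies in `int(P_d(K))`. Then `p ∈ int(P_A(K))` iff its degree-`d`
homogenization `p̂` is strictly positive on the compact set `K̃`. -/
theorem stmt11 {n d : ℕ} {ι : Type*} (E I : Set ι) (g : ι → MvPolynomial (Fin n) ℝ)
    (A : Finset (Fin n → ℕ)) (hdeg : ∀ α ∈ A, ∑ i, α i ≤ d) (hdeq : ∃ α ∈ A, ∑ i, α i = d)
    (hinf : closedAtInfty E I g)
    (hint : ∃ c₀ : expSet n d → ℝ,
      c₀ ∈ interior {c : expSet n d → ℝ | ∀ x ∈ semiSet E I g, 0 ≤ polyD c x} ∧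
      ∀ α : expSet n d, (α : Fin n → ℕ) ∉ A → c₀ α = 0)
    (c : A → ℝ) :
    c ∈ interior {c' : A → ℝ | ∀ x ∈ semiSet E I g, 0 ≤ polyA A c' x} ↔
      ∀ z ∈ tildeK E I g, 0 < hatEval A d c z.1 z.2 :=
  stmt11_general E I g A hdeg hinf hint c
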